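/- For the B(t) quantum random walk with 0 < t < 1, the common zero set on the unit torus of H and ∇H, where H = 2xy(z⁴+1) − (x+y+xy²+x²y)(z³+z)√(2t) + (4txy + x² + x²y² + 1 + y²)z², consists of exactly the four points (x,y,z) = ±(1, 1, √(t/2) ± i√(1−t/2)). -/

import Mathlib

/-!
Dividing by `x y z²`, `H` becomes a polynomial `F` in `X = x + x⁻¹`, `Y = y + y⁻¹`,
`Z = z + z⁻¹`, and Euler-type identities such as `x ∂ₓH - H = (x² - 1) y z² ∂F/∂X` show that
at a zero of `H` the partial derivative in `x` vanishes iff `x = ±1` or `∂F/∂X = 0`, and likewise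
for `y` and `z`. Solving the resulting system in `X, Y, Z` by cases, for `0 < t < 1` only
`X = Y = ±2`, `Z = ±√(2t)` survives: `x = y = ±1` and `z + z⁻¹ = ±√(2t)`, whose two roots are
`±(√(t/2) ± i √(1 - t/2))`.
-/

/-- The denominator polynomial of the B(t) quantum random walk (denominators cleared). -/
noncomputable def HB (t : ℝ) (x y z : ℂ) : ℂ :=
  2 * x * y * (z ^ 4 + 1) -
    (x + y + x * y ^ 2 + x ^ 2 * y) * (z ^ 3 + z) * (Real.sqrt (2 * t) : ℂ) +
    (4 * (t : ℂ) * x * y + x ^ 2 + x ^ 2 * y ^ 2 + 1 + y ^ 2) * z ^ 2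

open Complex

section

variable {K : Type*} [Field K]

theorem add_inv_sq_eq_four_iff {x : K} (hx : x ≠ 0) : (x + x⁻¹) ^ 2 = 4 ↔ x ^ 2 = 1 := by
  have key : (x + x⁻¹) ^ 2 - 4 = ((x ^ 2 - 1) / x) ^ 2 := by field_simp; ring
  rw [← sub_eq_zero, key, sq_eq_zero_iff, div_eq_zero_iff, or_iff_left hx, sub_eq_zero]

theorem add_inv_eq_two_mul_of_sq_eq_one {x : K} (hx : x ^ 2 = 1) : x + x⁻¹ = 2 * x := by
  rw [inv_eq_of_mul_eq_one_right (by rw [← sq, hx])]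
  ring

end

def reducedHB {K : Type*} [CommRing K] (s t X Y Z : K) : K :=
  2 * Z ^ 2 - 4 - s * Z * (X + Y) + X * Y + 4 * t

theorem reducedHB_critical {K : Type*} [Field K] [CharZero K] {s t X Y Z : K}
    (hs : s ^ 2 = 2 * t) (ht0 : t ≠ 0) (ht1 : t ≠ 1) (ht2 : t ≠ 2)
    (hF : reducedHB s t X Y Z = 0) (hX : X ^ 2 = 4 ∨ Y = s * Z) (hY : Y ^ 2 = 4 ∨ X = s * Z)
    (hZ : Z ^ 2 = 4 ∨ 4 * Z = s * (X + Y)) : Y = X ∧ X ^ 2 = 4 ∧ 2 * Z = s * X := by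
  unfold reducedHB at hF
  have ht1' : t - 1 ≠ 0 := sub_ne_zero.2 ht1
  rcases hX with hX | rfl <;> rcases hY with hY | hXs
  · have hXY : (Y - X) * (Y + X) = 0 := by linear_combination hY - hX
    rcases mul_eq_zero.1 hXY with hYX | hYX
    · obtain rfl : Y = X := by linear_combination hYX
      have hsq : (2 * Z - s * Y) ^ 2 = 0 := by
        linear_combination 2 * hF + Y ^ 2 * hs + (2 * t - 2) * hX
      exact ⟨rfl, hX, by linear_combination pow_eq_zero_iff two_ne_zero |>.1 hsq⟩
    · obtain rfl : Y = -X := by linear_combination hYX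
      rcases hZ with hZ | hZ
      · exact absurd (by linear_combination (hF - 2 * hZ + hX) / 4) ht0
      · exact absurd (by linear_combination (hF + hX - Z * hZ / 2) / 4) ht2
  · have : (t - 1) ^ 2 = 0 := by
      linear_combination
        (t * hF - (1 - t) * hX + (X + s * Z - t * (X + Y)) * hXs + Z ^ 2 * hs) / 4
    exact absurd (pow_eq_zero_iff two_ne_zero |>.1 this) ht1'
  · have : (t - 1) ^ 2 = 0 := by
      linear_combination (t * hF - (1 - t) * hY + Z ^ 2 * hs) / 4
    exact absurd (pow_eq_zero_iff two_ne_zero |>.1 this) ht1'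
  · subst hXs
    have hZ2 : Z ^ 2 = 2 := by
      have : (t - 1) * (Z ^ 2 - 2) = 0 := by linear_combination -(hF + Z ^ 2 * hs) / 2
      linear_combination (mul_eq_zero.1 this).resolve_left ht1'
    rcases hZ with hZ | hZ
    · exact absurd (by linear_combination hZ2 - hZ : (2 : K) = 0) two_ne_zero
    · have hZ0 : (t - 1) * Z = 0 := by linear_combination -(hZ + 2 * Z * hs) / 4
      rw [(mul_eq_zero.1 hZ0).resolve_left ht1'] at hZ2
      exact absurd (by linear_combination -hZ2 : (2 : K) = 0) two_ne_zero

section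
variable (t : ℝ) {x y z : ℂ}

theorem HB_eq_mul_reducedHB (hx : x ≠ 0) (hy : y ≠ 0) (hz : z ≠ 0) :
    HB t x y z = x * y * z ^ 2 *
      reducedHB (Real.sqrt (2 * t) : ℂ) t (x + x⁻¹) (y + y⁻¹) (z + z⁻¹) := by
  unfold HB reducedHB
  field_simp
  ring

theorem deriv_HB_x_eq_zero_iff (hx : x ≠ 0) (hy : y ≠ 0) (hz : z ≠ 0) (hH : HB t x y z = 0) :
    deriv (fun w => HB t w y z) x = 0 ↔
      x ^ 2 = 1 ∨ y + y⁻¹ = (Real.sqrt (2 * t) : ℂ) * (z + z⁻¹) := by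
  have euler : x * deriv (fun w => HB t w y z) x - HB t x y z =
      (x ^ 2 - 1) * (y * z ^ 2) * (y + y⁻¹ - (Real.sqrt (2 * t) : ℂ) * (z + z⁻¹)) := by
    simp (disch := fun_prop) only [HB, deriv_fun_add, deriv_fun_sub, deriv_fun_mul,
      deriv_fun_pow, deriv_id'', deriv_const, deriv_const_mul_id]
    field_simp
    ring
  rw [hH, sub_zero] at euler
  rw [← mul_eq_zero_iff_left hx, euler]
  simp [hy, hz, sub_eq_zero]

theorem deriv_HB_y_eq_zero_iff (hx : x ≠ 0) (hy : y ≠ 0) (hz : z ≠ 0) (hH : HB t x y z = 0) :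
    deriv (fun w => HB t x w z) y = 0 ↔
      y ^ 2 = 1 ∨ x + x⁻¹ = (Real.sqrt (2 * t) : ℂ) * (z + z⁻¹) := by
  have euler : y * deriv (fun w => HB t x w z) y - HB t x y z =
      (y ^ 2 - 1) * (x * z ^ 2) * (x + x⁻¹ - (Real.sqrt (2 * t) : ℂ) * (z + z⁻¹)) := by
    simp (disch := fun_prop) only [HB, deriv_fun_add, deriv_fun_sub, deriv_fun_mul,
      deriv_fun_pow, deriv_id'', deriv_const, deriv_const_mul_id, deriv_const_add_id]
    field_simp
    ring
  rw [hH, sub_zero] at euler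
  rw [← mul_eq_zero_iff_left hy, euler]
  simp [hx, hz, sub_eq_zero]

theorem deriv_HB_z_eq_zero_iff (hx : x ≠ 0) (hy : y ≠ 0) (hz : z ≠ 0) (hH : HB t x y z = 0) :
    deriv (fun w => HB t x y w) z = 0 ↔
      z ^ 2 = 1 ∨ 4 * (z + z⁻¹) = (Real.sqrt (2 * t) : ℂ) * (x + x⁻¹ + (y + y⁻¹)) := by
  have euler : z * deriv (fun w => HB t x y w) z - 2 * HB t x y z =
      (z ^ 2 - 1) * (x * y * z) *
        (4 * (z + z⁻¹) - (Real.sqrt (2 * t) : ℂ) * (x + x⁻¹ + (y + y⁻¹))) := by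
    simp (disch := fun_prop) only [HB, deriv_fun_add, deriv_fun_sub, deriv_fun_mul,
      deriv_fun_pow, deriv_id'', deriv_const]
    field_simp
    ring
  rw [hH, mul_zero, sub_zero] at euler
  rw [← mul_eq_zero_iff_left hz, euler]
  simp [hx, hy, hz, sub_eq_zero]

theorem HB_critical_iff_reducedHB (hx : x ≠ 0) (hy : y ≠ 0) (hz : z ≠ 0) :
    (HB t x y z = 0 ∧ deriv (fun w => HB t w y z) x = 0 ∧
        deriv (fun w => HB t x w z) y = 0 ∧ deriv (fun w => HB t x y w) z = 0) ↔
      reducedHB (Real.sqrt (2 * t) : ℂ) t (x + x⁻¹) (y + y⁻¹) (z + z⁻¹) = 0 ∧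
        (x ^ 2 = 1 ∨ y + y⁻¹ = (Real.sqrt (2 * t) : ℂ) * (z + z⁻¹)) ∧
        (y ^ 2 = 1 ∨ x + x⁻¹ = (Real.sqrt (2 * t) : ℂ) * (z + z⁻¹)) ∧
        (z ^ 2 = 1 ∨ 4 * (z + z⁻¹) = (Real.sqrt (2 * t) : ℂ) * (x + x⁻¹ + (y + y⁻¹))) := by
  have hH : HB t x y z = 0 ↔
      reducedHB (Real.sqrt (2 * t) : ℂ) t (x + x⁻¹) (y + y⁻¹) (z + z⁻¹) = 0 := by
    simp [HB_eq_mul_reducedHB t hx hy hz, hx, hy, hz]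
  rw [← hH]
  exact and_congr_right fun h0 => by
    rw [deriv_HB_x_eq_zero_iff t hx hy hz h0, deriv_HB_y_eq_zero_iff t hx hy hz h0,
      deriv_HB_z_eq_zero_iff t hx hy hz h0]

theorem HB_critical_iff (ht0 : 0 < t) (ht1 : t < 1) (hx : x ≠ 0) (hy : y ≠ 0) (hz : z ≠ 0) :
    (HB t x y z = 0 ∧ deriv (fun w => HB t w y z) x = 0 ∧
        deriv (fun w => HB t x w z) y = 0 ∧ deriv (fun w => HB t x y w) z = 0) ↔
      x ^ 2 = 1 ∧ y = x ∧ z ^ 2 - x * (Real.sqrt (2 * t) : ℂ) * z + 1 = 0 := by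
  set s : ℂ := ↑(Real.sqrt (2 * t))
  have hs : s ^ 2 = 2 * t := by
    rw [← ofReal_pow, Real.sq_sqrt (by positivity)]
    push_cast
    ring
  have hzq : z ^ 2 - x * s * z + 1 = 0 ↔ z + z⁻¹ = s * x := by
    rw [← sub_eq_zero (a := z + z⁻¹),
      show z + z⁻¹ - s * x = (z ^ 2 - x * s * z + 1) / z by field_simp; ring,
      div_eq_zero_iff, or_iff_left hz]
  rw [HB_critical_iff_reducedHB t hx hy hz]
  constructor
  · rintro ⟨hF, hX, hY, hZ⟩
    obtain ⟨hYX, hX4, hZX⟩ := reducedHB_critical hs (by exact_mod_cast ht0.ne')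
      (by exact_mod_cast ht1.ne) (by exact_mod_cast (by linarith : t ≠ 2)) hF
      (hX.imp_left (add_inv_sq_eq_four_iff hx).2) (hY.imp_left (add_inv_sq_eq_four_iff hy).2)
      (hZ.imp_left (add_inv_sq_eq_four_iff hz).2)
    have hx1 := (add_inv_sq_eq_four_iff hx).1 hX4
    have hy1 := (add_inv_sq_eq_four_iff hy).1 (hYX ▸ hX4)
    rw [add_inv_eq_two_mul_of_sq_eq_one hx1, add_inv_eq_two_mul_of_sq_eq_one hy1] at hYX
    rw [add_inv_eq_two_mul_of_sq_eq_one hx1] at hZX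
    exact ⟨hx1, by linear_combination hYX / 2, hzq.2 (by linear_combination hZX / 2)⟩
  · rintro ⟨hx1, rfl, hzy⟩
    rw [add_inv_eq_two_mul_of_sq_eq_one hx1, hzq.1 hzy]
    refine ⟨?_, Or.inl hx1, Or.inl hx1, Or.inr (by ring)⟩
    unfold reducedHB
    linear_combination -2 * y ^ 2 * hs + (4 - 4 * (t : ℂ)) * hx1

end

theorem sq_sub_two_mul_add_one_eq_zero_iff {A B ε z : ℂ} (hAB : A ^ 2 + B ^ 2 = 1)
    (hε : ε ^ 2 = 1) :
    z ^ 2 - ε * (2 * A) * z + 1 = 0 ↔ z = ε * (A + I * B) ∨ z = ε * (A - I * B) := by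
  rw [show z ^ 2 - ε * (2 * A) * z + 1 = (z - ε * (A + I * B)) * (z - ε * (A - I * B)) by
      linear_combination -ε ^ 2 * hAB - hε + ε ^ 2 * B ^ 2 * I_sq,
    mul_eq_zero, sub_eq_zero, sub_eq_zero]

/-- for 0 < t < 1, the common zero set on the unit torus of H and ∇H for
the B(t) walk consists of exactly the four points
(x,y,z) = ±(1, 1, √(t/2) ± i√(1−t/2)). -/
theorem Bt_singular_points (t : ℝ) (ht0 : 0 < t) (ht1 : t < 1)
    (x y z : ℂ) (hx : ‖x‖ = 1) (hy : ‖y‖ = 1) (hz : ‖z‖ = 1) :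
    (HB t x y z = 0 ∧ deriv (fun w => HB t w y z) x = 0 ∧
        deriv (fun w => HB t x w z) y = 0 ∧ deriv (fun w => HB t x y w) z = 0) ↔
      ((x = 1 ∧ y = 1 ∧
          z = (Real.sqrt (t / 2) : ℂ) + Complex.I * (Real.sqrt (1 - t / 2) : ℂ)) ∨
        (x = 1 ∧ y = 1 ∧
          z = (Real.sqrt (t / 2) : ℂ) - Complex.I * (Real.sqrt (1 - t / 2) : ℂ)) ∨
        (x = -1 ∧ y = -1 ∧
          z = -((Real.sqrt (t / 2) : ℂ) + Complex.I * (Real.sqrt (1 - t / 2) : ℂ))) ∨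
        (x = -1 ∧ y = -1 ∧
          z = -((Real.sqrt (t / 2) : ℂ) - Complex.I * (Real.sqrt (1 - t / 2) : ℂ)))) := by
  have hx0 : x ≠ 0 := norm_ne_zero_iff.1 (hx ▸ one_ne_zero)
  have hy0 : y ≠ 0 := norm_ne_zero_iff.1 (hy ▸ one_ne_zero)
  have hz0 : z ≠ 0 := norm_ne_zero_iff.1 (hz ▸ one_ne_zero)
  have hs : (Real.sqrt (2 * t) : ℂ) = 2 * Real.sqrt (t / 2) := by
    rw [show 2 * t = 2 ^ 2 * (t / 2) by ring, Real.sqrt_mul (by positivity),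
      Real.sqrt_sq zero_le_two]
    push_cast
    ring
  have hAB : (Real.sqrt (t / 2) : ℂ) ^ 2 + (Real.sqrt (1 - t / 2) : ℂ) ^ 2 = 1 := by
    rw [← ofReal_pow, ← ofReal_pow, Real.sq_sqrt (by linarith), Real.sq_sqrt (by linarith)]
    push_cast
    ring
  rw [HB_critical_iff t ht0 ht1 hx0 hy0 hz0, hs]
  constructor
  · rintro ⟨hx1, rfl, hzq⟩
    have hroots := (sq_sub_two_mul_add_one_eq_zero_iff hAB hx1).1 hzq
    rcases sq_eq_one_iff.1 hx1 with rfl | rfl <;>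
      simp only [one_mul, neg_one_mul] at hroots <;> tauto
  · rintro (⟨rfl, rfl, rfl⟩ | ⟨rfl, rfl, rfl⟩ | ⟨rfl, rfl, rfl⟩ | ⟨rfl, rfl, rfl⟩) <;>
      refine ⟨by norm_num, rfl, (sq_sub_two_mul_add_one_eq_zero_iff hAB (by norm_num)).2 ?_⟩ <;>
      simp
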